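/- Consider an imprecise Markov chain with lower transition operator T (extended to extended real maps as described). Then for any n ∈ ℕ, any extended real map f on 𝒳, and any natural number k with 1 ≤ k ≤ n: E(ω ↦ f(ω_n)) = E(ω ↦ (T^{n−k} f)(ω_k)); in particular, E(ω ↦ f(ω_n)) = E(ω ↦ (T^{n−1} f)(ω_1)). -/
import Mathlib


open Filter Topology

namespace IP

/-- A situation of length `n`: a tuple of the first `n` states. -/
abbrev Sit (𝒳 : ℕ → Type) (n : ℕ) := (i : Fin n) → 𝒳 i

/-- A path: an infinite sequence of states. -/
abbrev Path (𝒳 : ℕ → Type) := (i : ℕ) → 𝒳 i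

/-- The initial segment `ω^n` of a path. -/
def res {𝒳 : ℕ → Type} (ω : Path 𝒳) (n : ℕ) : Sit 𝒳 n := fun i => ω i

/-- The initial (empty) situation `□`. -/
def emptySit {𝒳 : ℕ → Type} : Sit 𝒳 0 := fun i => i.elim0

/-- Append a next state to a situation. -/
def snoc {𝒳 : ℕ → Type} {n : ℕ} (s : Sit 𝒳 n) (x : 𝒳 n) : Sit 𝒳 (n + 1) := fun i =>
  if h : (i : ℕ) < n then s ⟨i, h⟩
  else cast (congrArg 𝒳 (Nat.le_antisymm (Nat.le_of_not_lt h) (Nat.lt_succ_iff.mp i.isLt))) x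

/-- Truncate a situation of length `n` to its first `k` states. -/
def trunc {𝒳 : ℕ → Type} {n : ℕ} (s : Sit 𝒳 n) (k : ℕ) (h : k ≤ n) : Sit 𝒳 k :=
  fun i => s ⟨i, lt_of_lt_of_le i.isLt h⟩

/-- A (coherent) lower expectation on a nonempty finite set. -/
def IsLE {Y : Type} [Fintype Y] [Nonempty Y] (E : (Y → ℝ) → ℝ) : Prop :=
  (∀ f : Y → ℝ, (⨅ y, f y) ≤ E f) ∧
  (∀ f g : Y → ℝ, E f + E g ≤ E (fun y => f y + g y)) ∧
  (∀ (f : Y → ℝ) (c : ℝ), 0 ≤ c → E (fun y => c * f y) = c * E f)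

/-- Submartingale w.r.t. the local models `Q` of an imprecise probability tree. -/
def IsSubmartingale {𝒳 : ℕ → Type} (Q : ∀ n, Sit 𝒳 n → (𝒳 n → ℝ) → ℝ)
    (F : ∀ n, Sit 𝒳 n → ℝ) : Prop :=
  ∀ (n : ℕ) (s : Sit 𝒳 n), 0 ≤ Q n s (fun x => F (n + 1) (snoc s x) - F n s)

/-- Supermartingale: `-F` is a submartingale. -/
def IsSupermartingale {𝒳 : ℕ → Type} (Q : ∀ n, Sit 𝒳 n → (𝒳 n → ℝ) → ℝ)
    (F : ∀ n, Sit 𝒳 n → ℝ) : Prop :=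
  IsSubmartingale Q (fun n s => -F n s)

/-- A test supermartingale: nonnegative, starting at 1. -/
def IsTestSupermartingale {𝒳 : ℕ → Type} (Q : ∀ n, Sit 𝒳 n → (𝒳 n → ℝ) → ℝ)
    (F : ∀ n, Sit 𝒳 n → ℝ) : Prop :=
  IsSupermartingale Q F ∧ (∀ n s, 0 ≤ F n s) ∧ F 0 emptySit = 1

/-- An event is strictly null if some test supermartingale converges to `+∞` on it. -/
def StrictlyNull {𝒳 : ℕ → Type} (Q : ∀ n, Sit 𝒳 n → (𝒳 n → ℝ) → ℝ)
    (A : Set (Path 𝒳)) : Prop :=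
  ∃ F : ∀ n, Sit 𝒳 n → ℝ, IsTestSupermartingale Q F ∧
    ∀ ω ∈ A, Tendsto (fun n => F n (res ω n)) atTop atTop

/-- `limsup_n F(ω^n)` as an extended real. -/
noncomputable def pathLimsup {𝒳 : ℕ → Type} (F : ∀ n, Sit 𝒳 n → ℝ) (ω : Path 𝒳) : EReal :=
  Filter.limsup (fun n => (F n (res ω n) : EReal)) atTop

/-- `liminf_n F(ω^n)` as an extended real. -/
noncomputable def pathLiminf {𝒳 : ℕ → Type} (F : ∀ n, Sit 𝒳 n → ℝ) (ω : Path 𝒳) : EReal :=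
  Filter.liminf (fun n => (F n (res ω n) : EReal)) atTop

/-- A real process bounded above. -/
def BddAbv {𝒳 : ℕ → Type} (F : ∀ n, Sit 𝒳 n → ℝ) : Prop := ∃ B : ℝ, ∀ n s, F n s ≤ B

/-- A real process bounded below. -/
def BddBlw {𝒳 : ℕ → Type} (F : ∀ n, Sit 𝒳 n → ℝ) : Prop := ∃ B : ℝ, ∀ n s, B ≤ F n s

/-- Conditional global lower expectation `E(f|s)` of an extended real variable. -/
noncomputable def lexp {𝒳 : ℕ → Type} (Q : ∀ n, Sit 𝒳 n → (𝒳 n → ℝ) → ℝ) {n : ℕ}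
    (s : Sit 𝒳 n) (f : Path 𝒳 → EReal) : EReal :=
  sSup ((fun F : ∀ k, Sit 𝒳 k → ℝ => (F n s : EReal)) ''
    {F : ∀ k, Sit 𝒳 k → ℝ | IsSubmartingale Q F ∧ BddAbv F ∧
      ∀ ω : Path 𝒳, res ω n = s → pathLimsup F ω ≤ f ω})

/-- Conditional global upper expectation `Ē(f|s)`. -/
noncomputable def uexp {𝒳 : ℕ → Type} (Q : ∀ n, Sit 𝒳 n → (𝒳 n → ℝ) → ℝ) {n : ℕ}
    (s : Sit 𝒳 n) (f : Path 𝒳 → EReal) : EReal :=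
  - lexp Q s (fun ω => - f ω)

/-- The local models of a (time-homogeneous) imprecise Markov chain with initial model `E1`
and transition models `QT`. -/
def markovQ {X : Type} (E1 : (X → ℝ) → ℝ) (QT : X → (X → ℝ) → ℝ) :
    ∀ n, Sit (fun _ => X) n → (X → ℝ) → ℝ
  | 0, _ => E1
  | n + 1, s => QT (s ⟨n, Nat.lt_succ_self n⟩)

/-- Prefix a path with a situation (fixed state space). -/
def prependX {X : Type} {n : ℕ} (s : Sit (fun _ => X) n) (ω : ℕ → X) : ℕ → X :=
  fun i => if h : i < n then s ⟨i, h⟩ else ω (i - n)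

/-- Extension of a lower transition operator to extended real maps. -/
noncomputable def Text {X : Type} (T : (X → ℝ) → X → ℝ) (g : X → EReal) : X → EReal :=
  fun x => sSup ((fun h : X → ℝ => (T h x : EReal)) '' {h : X → ℝ | ∀ y, (h y : EReal) ≤ g y})

/-- The variation (semi)norm `max h - min h`. -/
noncomputable def varnorm {X : Type} [Fintype X] [Nonempty X] (h : X → ℝ) : ℝ :=
  (⨆ x, h x) - ⨅ x, h x

/-- The (weak) coefficient of ergodicity of a lower transition operator. -/
noncomputable def coeff {X : Type} [Fintype X] [Nonempty X] (S : (X → ℝ) → X → ℝ) : ℝ :=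
  sSup {v : ℝ | ∃ h : X → ℝ, (∀ x, 0 ≤ h x ∧ h x ≤ 1) ∧ v = varnorm (S h)}

/-- Extend a situation to a path, arbitrarily. -/
noncomputable def extend {𝒳 : ℕ → Type} [∀ k, Nonempty (𝒳 k)] {n : ℕ} (t : Sit 𝒳 n) :
    Path 𝒳 :=
  fun i => if h : i < n then t ⟨i, h⟩ else Classical.arbitrary (𝒳 i)


section Aux

/-! ### Basic facts about lower expectations -/

variable {Y : Type} [Fintype Y] [Nonempty Y] {E : (Y → ℝ) → ℝ}

lemma IsLE.zero' (hE : IsLE E) : E (fun _ => 0) = 0 := by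
  have h := hE.2.2 (fun _ => (0 : ℝ)) 0 le_rfl
  simpa using h

lemma IsLE.const' (hE : IsLE E) (c : ℝ) : E (fun _ => c) = c := by
  have h1 : (⨅ _ : Y, c) ≤ E (fun _ => c) := hE.1 _
  rw [ciInf_const] at h1
  have h2 : (⨅ _ : Y, -c) ≤ E (fun _ => -c) := hE.1 _
  rw [ciInf_const] at h2
  have h3 := hE.2.1 (fun _ => c) (fun _ => -c)
  have h4 : (fun _ : Y => c + -c) = (fun _ : Y => (0 : ℝ)) := by funext y; ring
  rw [h4, hE.zero'] at h3
  linarith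

lemma IsLE.mono' (hE : IsLE E) {f g : Y → ℝ} (h : ∀ y, f y ≤ g y) : E f ≤ E g := by
  have h1 := hE.2.1 f (fun y => g y - f y)
  have h2 : (fun y => f y + (g y - f y)) = g := by funext y; ring
  rw [h2] at h1
  have h3 : (0 : ℝ) ≤ ⨅ y, (g y - f y) := le_ciInf fun y => by linarith [h y]
  have h4 := hE.1 (fun y => g y - f y)
  linarith

lemma IsLE.exists_le (hE : IsLE E) (f : Y → ℝ) : ∃ y, E f ≤ f y := by
  obtain ⟨y0, hy0⟩ := Finite.exists_max f
  exact ⟨y0, le_trans (hE.mono' hy0) (le_of_eq (hE.const' (f y0)))⟩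

lemma IsLE.le_of_sub (hE : IsLE E) {h : Y → ℝ} {c : ℝ}
    (hp : 0 ≤ E (fun y => h y - c)) : c ≤ E h := by
  have h1 := hE.2.1 (fun y => h y - c) (fun _ => c)
  rw [hE.const'] at h1
  have h2 : (fun y => (h y - c) + c) = h := by funext y; ring
  rw [h2] at h1
  linarith

lemma IsLE.sub_nonneg' (hE : IsLE E) {h : Y → ℝ} {c : ℝ}
    (hc : c ≤ E h) : 0 ≤ E (fun y => h y - c) := by
  have h1 := hE.2.1 h (fun _ => -c)
  rw [hE.const'] at h1
  have h2 : (fun y => h y + -c) = (fun y => h y - c) := by funext y; ring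
  rw [h2] at h1
  linarith

end Aux

section Paths

set_option linter.unusedSectionVars false

variable {X : Type} [Fintype X] [Nonempty X]

lemma snoc_lt {n : ℕ} (s : Sit (fun _ : ℕ => X) n) (x : X) (i : Fin (n + 1))
    (h : (i : ℕ) < n) : snoc s x i = s ⟨i, h⟩ := dif_pos h

lemma snoc_last {n : ℕ} (s : Sit (fun _ : ℕ => X) n) (x : X) (h : n < n + 1) :
    snoc s x ⟨n, h⟩ = x := by
  show dite _ _ _ = x
  rw [dif_neg (lt_irrefl n)]
  exact eq_of_heq (cast_heq _ x)

lemma trunc_snoc {n k : ℕ} (s : Sit (fun _ : ℕ => X) n) (x : X) (h : k ≤ n)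
    (h' : k ≤ n + 1) : trunc (snoc s x) k h' = trunc s k h := by
  funext i
  show snoc s x ⟨(i : ℕ), _⟩ = s ⟨(i : ℕ), _⟩
  exact snoc_lt s x _ (lt_of_lt_of_le i.isLt h)

lemma trunc_self {n : ℕ} (s : Sit (fun _ : ℕ => X) n) (h : n ≤ n) : trunc s n h = s := rfl

lemma trunc_res (ω : Path (fun _ : ℕ => X)) {n k : ℕ} (h : k ≤ n) :
    trunc (res ω n) k h = res ω k := rfl

lemma res_zero (ω : Path (fun _ : ℕ => X)) : res ω 0 = emptySit := by
  funext i
  exact i.elim0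

/-- Building a path through a situation along which a submartingale never decreases below
its current value. -/
lemma exists_path {Q : ∀ n, Sit (fun _ : ℕ => X) n → (X → ℝ) → ℝ}
    (hQ : ∀ n s, IsLE (Q n s))
    {F : ∀ n, Sit (fun _ : ℕ => X) n → ℝ} (hF : IsSubmartingale Q F)
    {n : ℕ} (s : Sit (fun _ : ℕ => X) n) :
    ∃ ω : Path (fun _ : ℕ => X), res ω n = s ∧ ∀ k, n ≤ k → F n s ≤ F k (res ω k) := by
  have step : ∀ m (t : Sit (fun _ : ℕ => X) m), ∃ x, F m t ≤ F (m + 1) (snoc t x) := by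
    intro m t
    obtain ⟨x, hx⟩ := (hQ m t).exists_le (fun x => F (m + 1) (snoc t x) - F m t)
    exact ⟨x, by have := hF m t; linarith⟩
  choose st hst using step
  let tseq : ∀ k, Sit (fun _ : ℕ => X) (n + k) := fun k =>
    Nat.rec (motive := fun k => Sit (fun _ : ℕ => X) (n + k)) s
      (fun k tk => snoc tk (st (n + k) tk)) k
  have coh1 : ∀ k i (hi : i < n + k) (hi' : i < n + (k + 1)),
      tseq (k + 1) ⟨i, hi'⟩ = tseq k ⟨i, hi⟩ := by
    intro k i hi hi'
    exact snoc_lt (tseq k) _ ⟨i, hi'⟩ hi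
  have coh : ∀ k' k, k ≤ k' → ∀ i (hi : i < n + k) (hi' : i < n + k'),
      tseq k' ⟨i, hi'⟩ = tseq k ⟨i, hi⟩ := by
    intro k'
    induction k' with
    | zero => intro k hk i hi hi'; obtain rfl : k = 0 := Nat.le_zero.mp hk; rfl
    | succ m ih =>
      intro k hk i hi hi'
      rcases eq_or_lt_of_le hk with rfl | h
      · rfl
      · have hk' : k ≤ m := Nat.lt_succ_iff.mp h
        have him : i < n + m := lt_of_lt_of_le hi (by omega)
        rw [coh1 m i him hi', ih k hk' i hi him]
  let ω : Path (fun _ : ℕ => X) := fun i => tseq (i + 1) ⟨i, by omega⟩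
  have hres : ∀ k, res ω (n + k) = tseq k := by
    intro k
    funext i
    show tseq ((i : ℕ) + 1) ⟨(i : ℕ), _⟩ = tseq k i
    rcases le_total ((i : ℕ) + 1) k with h | h
    · have := coh k ((i : ℕ) + 1) h (i : ℕ) (by omega) i.isLt
      rw [this]
    · have := coh ((i : ℕ) + 1) k h (i : ℕ) i.isLt (by omega)
      rw [← this]
  have mono : ∀ k, F n s ≤ F (n + k) (tseq k) := by
    intro k
    induction k with
    | zero => exact le_rfl
    | succ m ih => exact le_trans ih (hst (n + m) (tseq m))
  refine ⟨ω, hres 0, ?_⟩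
  intro k hk
  obtain ⟨d, rfl⟩ : ∃ d, k = n + d := ⟨k - n, by omega⟩
  rw [hres d]
  exact mono d

end Paths
section Limsup

set_option linter.unusedSectionVars false

variable {X : Type} [Fintype X] [Nonempty X]

lemma le_pathLimsup {Q : ∀ n, Sit (fun _ : ℕ => X) n → (X → ℝ) → ℝ}
    (hQ : ∀ n s, IsLE (Q n s))
    {F : ∀ n, Sit (fun _ : ℕ => X) n → ℝ} (hF : IsSubmartingale Q F)
    {N : ℕ} (t : Sit (fun _ : ℕ => X) N) :
    ∃ ω : Path (fun _ : ℕ => X), res ω N = t ∧ (F N t : EReal) ≤ pathLimsup F ω := by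
  obtain ⟨ω, hω, hmono⟩ := exists_path hQ hF t
  refine ⟨ω, hω, Filter.le_limsup_of_frequently_le' ?_⟩
  exact ((Filter.eventually_atTop.2 ⟨N, fun k hk =>
    EReal.coe_le_coe_iff.2 (hmono k hk)⟩).frequently)

lemma pathLimsup_eventually_const {F : ∀ n, Sit (fun _ : ℕ => X) n → ℝ}
    {ω : Path (fun _ : ℕ => X)} {c : ℝ} {N : ℕ}
    (h : ∀ k, N ≤ k → F k (res ω k) = c) : pathLimsup F ω = (c : EReal) := by
  have he : (fun k => (F k (res ω k) : EReal)) =ᶠ[Filter.atTop] (fun _ => (c : EReal)) :=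
    Filter.eventually_atTop.2 ⟨N, fun k hk => congrArg (fun r : ℝ => (r : EReal)) (h k hk)⟩
  rw [pathLimsup, Filter.limsup_congr he, Filter.limsup_const]

lemma ereal_le_of_forall_sub (r : ℝ) (x : EReal)
    (h : ∀ ε : ℝ, 0 < ε → ((r - ε : ℝ) : EReal) ≤ x) : (r : EReal) ≤ x := by
  refine le_of_forall_lt fun c hc => ?_
  induction c with
  | bot => exact lt_of_lt_of_le (EReal.bot_lt_coe (r - 1)) (h 1 one_pos)
  | coe c =>
    have hcr : c < r := EReal.coe_lt_coe_iff.1 hc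
    refine lt_of_lt_of_le (EReal.coe_lt_coe_iff.2 (show c < r - (r - c) / 2 by linarith))
      (h ((r - c) / 2) (by linarith))
  | top => exact absurd hc (not_top_lt)

end Limsup
section OneStep

set_option linter.unusedSectionVars false
set_option maxHeartbeats 1000000

variable {X : Type} [Fintype X] [Nonempty X]

lemma onestep (E1 : (X → ℝ) → ℝ) (T : (X → ℝ) → X → ℝ)
    (hE1 : IsLE E1) (hT : ∀ x : X, IsLE (fun h => T h x)) (m : ℕ) (g : X → EReal) :
    lexp (markovQ E1 (fun x h => T h x)) emptySit
        (fun ω : Path (fun _ : ℕ => X) => g (ω (m + 1)))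
      = lexp (markovQ E1 (fun x h => T h x)) emptySit
        (fun ω : Path (fun _ : ℕ => X) => Text T g (ω m)) := by
  have hQ : ∀ n s, IsLE (markovQ E1 (fun x h => T h x) n s) := by
    intro n s
    cases n with
    | zero => exact hE1
    | succ k => exact hT (s ⟨k, Nat.lt_succ_self k⟩)
  simp only [lexp]
  apply le_antisymm
  · refine sSup_le ?_
    rintro a ⟨F, ⟨hsub, hbdd, hlim⟩, rfl⟩
    show (F 0 emptySit : EReal) ≤ _
    have key : ∀ t : Sit (fun _ : ℕ => X) (m + 1),
        (F (m + 1) t : EReal) ≤ Text T g (t ⟨m, Nat.lt_succ_self m⟩) := by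
      intro t
      have hmem : ∀ y, ((F (m + 2) (snoc t y) : ℝ) : EReal) ≤ g y := by
        intro y
        obtain ⟨ω, hω, hle⟩ := le_pathLimsup hQ hsub (snoc t y)
        have h1 := hlim ω (res_zero ω)
        have hy : ω (m + 1) = y := by
          have h2 : res ω (m + 2) ⟨m + 1, Nat.lt_succ_self (m + 1)⟩
              = snoc t y ⟨m + 1, Nat.lt_succ_self (m + 1)⟩ := by rw [hω]
          rw [snoc_last] at h2
          exact h2
        rw [hy] at h1
        exact le_trans hle h1
      have hsm : (0 : ℝ) ≤ T (fun y => F (m + 2) (snoc t y) - F (m + 1) t)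
          (t ⟨m, Nat.lt_succ_self m⟩) := hsub (m + 1) t
      have hTle : F (m + 1) t ≤ T (fun y => F (m + 2) (snoc t y))
          (t ⟨m, Nat.lt_succ_self m⟩) := (hT _).le_of_sub hsm
      refine le_trans (EReal.coe_le_coe_iff.2 hTle) (le_sSup ?_)
      exact ⟨fun y => F (m + 2) (snoc t y), hmem, rfl⟩
    let G : ∀ k, Sit (fun _ : ℕ => X) k → ℝ := fun k s =>
      if hk : k ≤ m + 1 then F k s
      else F (m + 1) (trunc s (m + 1) (le_of_lt (not_le.mp hk)))
    have hGle : ∀ k (hk : k ≤ m + 1) (s : Sit (fun _ : ℕ => X) k), G k s = F k s :=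
      fun k hk s => dif_pos hk
    have hGge : ∀ k (hk : m + 1 ≤ k) (s : Sit (fun _ : ℕ => X) k),
        G k s = F (m + 1) (trunc s (m + 1) hk) := by
      intro k hk s
      by_cases h : k ≤ m + 1
      · obtain rfl : k = m + 1 := le_antisymm h hk
        rw [hGle _ le_rfl, trunc_self]
      · exact dif_neg h
    have hGsub : IsSubmartingale (markovQ E1 (fun x h => T h x)) G := by
      intro n s
      by_cases hn : n + 1 ≤ m + 1
      · have e : (fun x => G (n + 1) (snoc s x) - G n s)
            = (fun x => F (n + 1) (snoc s x) - F n s) := by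
          funext x
          rw [hGle (n + 1) hn, hGle n (le_trans (Nat.le_succ n) hn)]
        rw [e]; exact hsub n s
      · have hn' : m + 1 ≤ n := by omega
        have e : (fun x => G (n + 1) (snoc s x) - G n s) = (fun _ => (0 : ℝ)) := by
          funext x
          rw [hGge (n + 1) (le_trans hn' (Nat.le_succ n)), hGge n hn',
            trunc_snoc s x hn' _]
          exact sub_self _
        rw [e]
        exact le_of_eq ((hQ n s).zero').symm
    have hGbdd : BddAbv G := by
      obtain ⟨B, hB⟩ := hbdd
      refine ⟨B, fun k s => ?_⟩
      by_cases hk : k ≤ m + 1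
      · rw [hGle k hk]; exact hB k s
      · rw [hGge k (by omega) s]; exact hB _ _
    have hGlim : ∀ ω : Path (fun _ : ℕ => X), res ω 0 = emptySit →
        pathLimsup G ω ≤ Text T g (ω m) := by
      intro ω _
      have hconst : ∀ k, m + 1 ≤ k → G k (res ω k) = F (m + 1) (res ω (m + 1)) := by
        intro k hk
        rw [hGge k hk, trunc_res ω hk]
      rw [pathLimsup_eventually_const hconst]
      exact key (res ω (m + 1))
    refine le_sSup ⟨G, ⟨hGsub, hGbdd, hGlim⟩, ?_⟩
    show ((G 0 emptySit : ℝ) : EReal) = ((F 0 emptySit : ℝ) : EReal)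
    rw [hGle 0 (Nat.zero_le _)]
  · refine sSup_le ?_
    rintro a ⟨G, ⟨hsub, hbdd, hlim⟩, rfl⟩
    show (G 0 emptySit : EReal) ≤ _
    refine ereal_le_of_forall_sub _ _ ?_
    intro ε hε
    have key : ∀ t : Sit (fun _ : ℕ => X) (m + 1),
        (G (m + 1) t : EReal) ≤ Text T g (t ⟨m, Nat.lt_succ_self m⟩) := by
      intro t
      obtain ⟨ω, hω, hle⟩ := le_pathLimsup hQ hsub t
      have h1 := hlim ω (res_zero ω)
      have hx : ω m = t ⟨m, Nat.lt_succ_self m⟩ := by rw [← hω]; rfl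
      rw [hx] at h1
      exact le_trans hle h1
    have choice : ∀ t : Sit (fun _ : ℕ => X) (m + 1), ∃ h : X → ℝ,
        (∀ y, (h y : EReal) ≤ g y) ∧
          G (m + 1) t - ε ≤ T h (t ⟨m, Nat.lt_succ_self m⟩) := by
      intro t
      have h1 : ((G (m + 1) t - ε : ℝ) : EReal)
          < Text T g (t ⟨m, Nat.lt_succ_self m⟩) :=
        lt_of_lt_of_le (EReal.coe_lt_coe_iff.2 (by linarith)) (key t)
      simp only [Text] at h1
      obtain ⟨b, ⟨h, hh, rfl⟩, hb⟩ := lt_sSup_iff.mp h1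
      exact ⟨h, hh, le_of_lt (EReal.coe_lt_coe_iff.1 hb)⟩
    choose hf hf1 hf2 using choice
    let F : ∀ k, Sit (fun _ : ℕ => X) k → ℝ := fun k s =>
      if hk : k ≤ m + 1 then G k s - ε
      else hf (trunc s (m + 1) (le_of_lt (not_le.mp hk))) (s ⟨m + 1, not_le.mp hk⟩)
    have hFle : ∀ k (hk : k ≤ m + 1) (s : Sit (fun _ : ℕ => X) k),
        F k s = G k s - ε := fun k hk s => dif_pos hk
    have hFgt : ∀ k (hk : m + 1 < k) (s : Sit (fun _ : ℕ => X) k),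
        F k s = hf (trunc s (m + 1) (le_of_lt hk)) (s ⟨m + 1, hk⟩) := by
      intro k hk s
      exact dif_neg (not_le.mpr hk)
    have hFsub : IsSubmartingale (markovQ E1 (fun x h => T h x)) F := by
      intro n s
      rcases lt_trichotomy n (m + 1) with hn | rfl | hn
      · have e : (fun x => F (n + 1) (snoc s x) - F n s)
            = (fun x => G (n + 1) (snoc s x) - G n s) := by
          funext x
          rw [hFle (n + 1) hn, hFle n (le_of_lt hn)]
          ring
        rw [e]; exact hsub n s
      · have e : (fun x => F (m + 1 + 1) (snoc s x) - F (m + 1) s)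
            = (fun x => hf s x - (G (m + 1) s - ε)) := by
          funext x
          rw [hFgt (m + 2) (Nat.lt_succ_self (m + 1)) (snoc s x),
            hFle (m + 1) le_rfl s, trunc_snoc s x le_rfl _, trunc_self, snoc_last]
        rw [e]
        exact (hT (s ⟨m, Nat.lt_succ_self m⟩)).sub_nonneg' (hf2 s)
      · have e : (fun x => F (n + 1) (snoc s x) - F n s) = (fun _ => (0 : ℝ)) := by
          funext x
          rw [hFgt (n + 1) (lt_trans hn (Nat.lt_succ_self n)) (snoc s x), hFgt n hn s,
            trunc_snoc s x (le_of_lt hn) _, snoc_lt s x _ hn]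
          exact sub_self _
        rw [e]
        exact le_of_eq ((hQ n s).zero').symm
    have hFbdd : BddAbv F := by
      obtain ⟨B, hB⟩ := hbdd
      refine ⟨max B (Finset.univ.sup' Finset.univ_nonempty
        (fun p : (Sit (fun _ : ℕ => X) (m + 1)) × X => hf p.1 p.2)), fun k s => ?_⟩
      by_cases hk : k ≤ m + 1
      · rw [hFle k hk s]
        exact le_trans (by linarith [hB k s]) (le_max_left _ _)
      · rw [hFgt k (not_le.mp hk) s]
        exact le_trans (Finset.le_sup'
          (fun p : (Sit (fun _ : ℕ => X) (m + 1)) × X => hf p.1 p.2)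
          (Finset.mem_univ (trunc s (m + 1) (le_of_lt (not_le.mp hk)),
            s ⟨m + 1, not_le.mp hk⟩))) (le_max_right _ _)
    have hFlim : ∀ ω : Path (fun _ : ℕ => X), res ω 0 = emptySit →
        pathLimsup F ω ≤ g (ω (m + 1)) := by
      intro ω _
      have hconst : ∀ k, m + 2 ≤ k → F k (res ω k) = hf (res ω (m + 1)) (ω (m + 1)) := by
        intro k hk
        rw [hFgt k hk (res ω k)]
        rfl
      rw [pathLimsup_eventually_const hconst]
      exact hf1 (res ω (m + 1)) (ω (m + 1))
    refine le_trans ?_ (le_sSup ⟨F, ⟨hFsub, hFbdd, hFlim⟩, rfl⟩)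
    show ((G 0 emptySit - ε : ℝ) : EReal) ≤ ((F 0 emptySit : ℝ) : EReal)
    rw [hFle 0 (Nat.zero_le _)]

end OneStep
/-- The lower expectation of a function of the state at a single time, via the lower
transition operator. -/
theorem single_state_lexp {X : Type} [Fintype X] [Nonempty X]
    (E1 : (X → ℝ) → ℝ) (T : (X → ℝ) → X → ℝ)
    (hE1 : IsLE E1) (hT : ∀ x : X, IsLE (fun h => T h x))
    (j d : ℕ) (f : X → EReal) :
    (lexp (markovQ E1 (fun x h => T h x)) emptySit
        (fun ω : Path (fun _ => X) => f (ω (j + d)))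
      = lexp (markovQ E1 (fun x h => T h x)) emptySit
          (fun ω : Path (fun _ => X) => (Text T)^[d] f (ω j)))
    ∧ (lexp (markovQ E1 (fun x h => T h x)) emptySit
        (fun ω : Path (fun _ => X) => f (ω d))
      = lexp (markovQ E1 (fun x h => T h x)) emptySit
          (fun ω : Path (fun _ => X) => (Text T)^[d] f (ω 0))) := by
  have key : ∀ (d : ℕ) (f : X → EReal) (j : ℕ),
      lexp (markovQ E1 (fun x h => T h x)) emptySit
          (fun ω : Path (fun _ => X) => f (ω (j + d)))
        = lexp (markovQ E1 (fun x h => T h x)) emptySit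
          (fun ω : Path (fun _ => X) => (Text T)^[d] f (ω j)) := by
    intro d
    induction d with
    | zero => intro f j; simp
    | succ e ih =>
      intro f j
      rw [Function.iterate_succ_apply]
      exact (onestep E1 T hE1 hT (j + e) f).trans (ih (Text T f) j)
  refine ⟨key d f j, ?_⟩
  have h0 := key d f 0
  rw [Nat.zero_add] at h0
  exact h0


end IP
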